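/- Let G be a nontrivial additive subgroup of ℂ and let · be a transposed Poisson structure on the not-finitely graded Heisenberg–Virasoro algebra Ŵ(G). Then C · x = 0 for all x ∈ Ŵ(G), and there exists a finitely supported family of complex numbers (a^{d,k}) indexed by d ∈ G and k ∈ ℤ_{≥0} such that L_{α,i} · L_{β,j} = Σ_{d ∈ G} Σ_{k ∈ ℤ_{≥0}} a^{d,k} L_{d+α+β, k+i+j+1} for all α, β ∈ G and i, j ∈ ℤ_{≥0}. -/

import Mathlib

/-!
Each `x ↦ z · x` is a ½-derivation. Compatibility with `x = C` makes `z · C` central, so by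
commutativity `C · [x, y] = 0`; as `Ŵ(G)` is perfect, `C · x = 0`.

For a ½-derivation `φ` with `φ C = 0`, the `L γ n`-coordinates of the ½-derivation identity on
pairs of basis vectors are linear recurrences in the coordinates of `φ (L β j)`. Because `G` is
infinite, there are enough choices of the free parameters to solve them: `φ (L β j)` is the
translate of `φ (L 0 0)` by `(β, j)`, and the central coordinates (which carry the cocycle
`(α³ - α) / 12`) show that `φ (L 0 0)` has no `C`- and no `L δ 0`-component. Applied to
`φ = L α i · -` and combined with commutativity, this makes `L α i · L β j` the translate of
`L 0 0 · L 0 0` by `(α + β, i + j)`.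
-/

open scoped Classical

/-- Index set for the basis of the not-finitely graded Heisenberg–Virasoro
algebra `Ŵ(G)`: vectors `L α i` for `α ∈ G`, `i ∈ ℤ_{≥0}`, together with the
central element `C`. -/
inductive WhatIdx (G : AddSubgroup ℂ) : Type
  | L : G → ℕ → WhatIdx G
  | C : WhatIdx G

section HalfDerivation

variable (R : Type*) {L : Type*} [CommRing R] [LieRing L] [LieAlgebra R L]

def IsHalfDerivation (φ : L →ₗ[R] L) : Prop :=
  ∀ x y : L, (2 : R) • φ ⁅x, y⁆ = ⁅φ x, y⁆ + ⁅x, φ y⁆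

variable {R} {mul : L →ₗ[R] L →ₗ[R] L}

theorem lie_mul_central_eq_zero (hmul : ∀ z, IsHalfDerivation R (mul z)) {c : L}
    (hc : ∀ x : L, ⁅c, x⁆ = 0) (z y : L) : ⁅mul z c, y⁆ = 0 := by
  simpa [hc] using (hmul z c y).symm

theorem mul_central_lie_eq_zero [NoZeroSMulDivisors R L] [NeZero (2 : R)]
    (hcomm : ∀ x y, mul x y = mul y x) (hmul : ∀ z, IsHalfDerivation R (mul z)) {c : L}
    (hc : ∀ x : L, ⁅c, x⁆ = 0) (x y : L) : mul c ⁅x, y⁆ = 0 := by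
  have h := hmul c x y
  rw [hcomm c x, hcomm c y, lie_mul_central_eq_zero hmul hc, ← lie_skew x (mul y c),
    lie_mul_central_eq_zero hmul hc, neg_zero, zero_add] at h
  exact (eq_zero_or_eq_zero_of_smul_eq_zero h).resolve_left two_ne_zero

end HalfDerivation

namespace HeisenbergVirasoro

variable {G : AddSubgroup ℂ}

theorem exists_coe_notMem [Nontrivial G] (s : Finset ℂ) : ∃ α : G, (α : ℂ) ∉ s := by
  obtain ⟨t, ht⟩ := exists_ne (0 : G)
  have : Infinite G := Infinite.of_injective (fun k : ℤ => k • t) (smul_left_injective ℤ ht)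
  obtain ⟨α, hα⟩ :=
    Infinite.exists_notMem_finset (s.preimage ((↑) : G → ℂ) Subtype.val_injective.injOn)
  exact ⟨α, by simpa using hα⟩

variable {Lg : Type*} [LieRing Lg] [LieAlgebra ℂ Lg] (bas : Module.Basis (WhatIdx G) ℂ Lg)

structure IsWhatBasis : Prop where
  lie_L : ∀ (α β : G) (i j : ℕ),
    ⁅bas (.L α i), bas (.L β j)⁆ =
      ((β : ℂ) - α) • bas (.L (α + β) (i + j)) +
      ((j : ℂ) - i) • bas (.L (α + β) (i + j + 1)) +
      (if α + β = 0 ∧ i = 0 ∧ j = 0 then ((α : ℂ) ^ 3 - α) / 12 else 0) • bas .C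
  lie_C : ∀ x : Lg, ⁅bas .C, x⁆ = 0

/-- Extended by zero to negative `n`, so that shifted indices such as `n - j` need no case
split. -/
noncomputable def coordL (γ : G) (n : ℤ) : Lg →ₗ[ℂ] ℂ :=
  if 0 ≤ n then bas.coord (.L γ n.toNat) else 0

theorem coordL_of_neg (γ : G) {n : ℤ} (hn : n < 0) : coordL bas γ n = 0 :=
  if_neg hn.not_ge

theorem coordL_natCast (γ : G) (m : ℕ) : coordL bas γ m = bas.coord (.L γ m) := by
  simp [coordL]

theorem coordL_basis_L (γ δ : G) (n : ℤ) (m : ℕ) :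
    coordL bas γ n (bas (.L δ m)) = if γ = δ ∧ n = m then 1 else 0 := by
  rcases lt_or_ge n 0 with hn | hn
  · rw [coordL_of_neg bas γ hn, if_neg (by omega), LinearMap.zero_apply]
  · lift n to ℕ using hn
    simp [coordL_natCast, Finsupp.single_apply, eq_comm]

@[simp] theorem coordL_basis_C (γ : G) (n : ℤ) : coordL bas γ n (bas .C) = 0 := by
  unfold coordL; split_ifs <;> simp

noncomputable def shift (β : G) (j : ℕ) : Lg →ₗ[ℂ] Lg :=
  bas.constr ℂ fun
    | .L γ n => bas (.L (γ + β) (n + j))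
    | .C => 0

@[simp] theorem shift_basis_L (β : G) (j : ℕ) (γ : G) (n : ℕ) :
    shift bas β j (bas (.L γ n)) = bas (.L (γ + β) (n + j)) := by
  simp [shift, Module.Basis.constr_basis]

@[simp] theorem shift_basis_C (β : G) (j : ℕ) : shift bas β j (bas .C) = 0 := by
  simp [shift, Module.Basis.constr_basis]

theorem shift_shift (α β : G) (i j : ℕ) (v : Lg) :
    shift bas β j (shift bas α i v) = shift bas (α + β) (i + j) v := by
  suffices h : (shift bas β j).comp (shift bas α i) = shift bas (α + β) (i + j) from
    LinearMap.congr_fun h v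
  refine bas.ext fun idx => ?_
  cases idx <;> simp [add_assoc]

theorem coordL_shift (β : G) (j : ℕ) (γ : G) (n : ℤ) (v : Lg) :
    coordL bas γ n (shift bas β j v) = coordL bas (γ - β) (n - j) v := by
  suffices h : (coordL bas γ n).comp (shift bas β j) = coordL bas (γ - β) (n - j) from
    LinearMap.congr_fun h v
  refine bas.ext fun idx => ?_
  cases idx with
  | C => simp
  | L δ m =>
    simp only [LinearMap.comp_apply, shift_basis_L, coordL_basis_L, sub_eq_iff_eq_add]
    push_cast
    rfl

theorem coord_C_shift (β : G) (j : ℕ) (v : Lg) : bas.coord .C (shift bas β j v) = 0 := by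
  suffices h : (bas.coord .C).comp (shift bas β j) = 0 from LinearMap.congr_fun h v
  refine bas.ext fun idx => ?_
  cases idx <;> simp

theorem exists_eq_sum_basis_L_succ {v : Lg} (hC : bas.coord .C v = 0)
    (h0 : ∀ δ, bas.coord (.L δ 0) v = 0) :
    ∃ a : G × ℕ →₀ ℂ, v = a.sum fun p c => c • bas (.L p.1 (p.2 + 1)) := by
  have hinj : Function.Injective fun p : G × ℕ => WhatIdx.L p.1 (p.2 + 1) := by
    rintro ⟨δ, k⟩ ⟨δ', k'⟩ h
    simp_all
  refine ⟨Finsupp.comapDomain _ (bas.repr v) hinj.injOn, ?_⟩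
  have hsupp :
      ↑(bas.repr v).support ⊆ Set.range fun p : G × ℕ => WhatIdx.L p.1 (p.2 + 1) := by
    rintro (⟨δ, _ | k⟩ | _) h
    · simp_all
    · exact ⟨(δ, k), rfl⟩
    · simp_all
  conv_lhs =>
    rw [← bas.linearCombination_repr v, ← Finsupp.mapDomain_comapDomain _ hinj _ hsupp]
  rw [Finsupp.linearCombination_mapDomain, Finsupp.linearCombination_apply]
  rfl

variable {bas}

theorem coordL_lie_basis (hbas : IsWhatBasis bas) (v : Lg) (β : G) (j : ℕ) (γ : G)
    (n : ℤ) :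
    coordL bas γ n ⁅v, bas (.L β j)⁆ =
      (2 * β - γ) * coordL bas (γ - β) (n - j) v +
        (2 * j + 1 - n) * coordL bas (γ - β) (n - j - 1) v := by
  suffices h : (coordL bas γ n).comp
      ((LinearMap.mk₂ ℂ _ add_lie smul_lie lie_add lie_smul).flip (bas (.L β j))) =
      (2 * β - γ : ℂ) • coordL bas (γ - β) (n - j) +
        (2 * j + 1 - n : ℂ) • coordL bas (γ - β) (n - j - 1) by
    simpa using LinearMap.congr_fun h v
  refine bas.ext fun idx => ?_
  cases idx with
  | C => simp [hbas.lie_C]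
  | L δ m =>
    simp only [LinearMap.comp_apply, LinearMap.flip_apply, LinearMap.mk₂_apply, hbas.lie_L,
      map_add, map_smul, coordL_basis_C, coordL_basis_L, smul_eq_mul, mul_zero, add_zero,
      LinearMap.add_apply, LinearMap.smul_apply, sub_eq_iff_eq_add]
    by_cases hγ : γ = δ + β
    · subst hγ
      simp only [true_and, Nat.cast_add, Nat.cast_one]
      push_cast
      split_ifs <;> first | (exfalso; omega) | ring1 | (subst n; push_cast; ring1)
    · simp [hγ]

theorem coord_C_lie_basis (hbas : IsWhatBasis bas) (v : Lg) (β : G) (j : ℕ) :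
    bas.coord .C ⁅v, bas (.L β j)⁆ =
      (if j = 0 then ((β : ℂ) - β ^ 3) / 12 else 0) * coordL bas (-β) 0 v := by
  set c : ℂ := if j = 0 then ((β : ℂ) - β ^ 3) / 12 else 0 with hc
  suffices h : (bas.coord .C).comp ((LinearMap.mk₂ ℂ _ add_lie smul_lie lie_add lie_smul).flip
      (bas (.L β j))) = c • coordL bas (-β) 0 by
    simpa using LinearMap.congr_fun h v
  refine bas.ext fun idx => ?_
  cases idx with
  | C => simp [hbas.lie_C]
  | L δ m =>
    simp only [LinearMap.comp_apply, LinearMap.flip_apply, LinearMap.mk₂_apply, hbas.lie_L,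
      LinearMap.smul_apply, coordL_basis_L, neg_eq_iff_add_eq_zero, hc, map_add, map_smul,
      Module.Basis.coord_apply, Module.Basis.repr_self, Finsupp.single_apply, smul_eq_mul,
      reduceCtorEq, if_false, mul_zero, zero_add]
    by_cases h : δ + β = 0 ∧ m = 0 ∧ j = 0
    · obtain ⟨hδ, rfl, rfl⟩ := h
      obtain rfl := eq_neg_of_add_eq_zero_left hδ
      simp; ring
    · rw [if_neg h]
      split_ifs <;> simp_all [add_comm]
      omega

theorem eq_zero_of_map_lie_eq_zero [Nontrivial G] (hbas : IsWhatBasis bas) {M : Type*}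
    [AddCommGroup M] [Module ℂ M] {f : Lg →ₗ[ℂ] M} (hf : ∀ x y : Lg, f ⁅x, y⁆ = 0) :
    f = 0 := by
  obtain ⟨t, ht⟩ := exists_coe_notMem (G := G) {0}
  replace ht : (t : ℂ) ≠ 0 := by simpa using ht
  have hC : f (bas .C) = 0 := by
    have h₁ := hf (bas (.L t 0)) (bas (.L (-t) 0))
    have h₂ := hf (bas (.L (t + t) 0)) (bas (.L (-(t + t)) 0))
    simp only [hbas.lie_L, add_neg_cancel, and_self, if_true, map_add, map_smul] at h₁ h₂
    push_cast at h₁ h₂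
    have h : ((t : ℂ) ^ 3 / 2) • f (bas .C) = 0 := by
      linear_combination (norm := module) h₂ - (2 : ℂ) • h₁
    simpa [ht] using h
  refine bas.ext fun idx => ?_
  cases idx with
  | C => simpa using hC
  | L σ m =>
    have h₁ := hf (bas (.L 0 0)) (bas (.L σ m))
    have h₂ := hf (bas (.L t 0)) (bas (.L (σ - t) m))
    simp only [hbas.lie_L, map_add, map_smul, hC, smul_zero, add_zero, zero_add,
      add_sub_cancel] at h₁ h₂
    push_cast at h₁ h₂
    have h : (2 * (t : ℂ)) • f (bas (.L σ m)) = 0 := by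
      linear_combination (norm := module) h₁ - h₂
    simpa [ht] using h

theorem mul_basis_C_eq_zero [Nontrivial G] (hbas : IsWhatBasis bas)
    {mul : Lg →ₗ[ℂ] Lg →ₗ[ℂ] Lg} (hcomm : ∀ x y, mul x y = mul y x)
    (hmul : ∀ z, IsHalfDerivation ℂ (mul z)) : mul (bas .C) = 0 :=
  eq_zero_of_map_lie_eq_zero hbas (mul_central_lie_eq_zero hcomm hmul hbas.lie_C)

/-- `F β j γ n` models the `L γ n`-coordinate of `φ (L β j)` for a ½-derivation `φ` with
`φ C = 0`: `master` is the `L γ n`-coordinate of the ½-derivation identity on `L α i` and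
`L β j`. -/
structure IsHalfDerivationCoeff (F : G → ℕ → G → ℤ → ℂ) : Prop where
  eq_zero_of_neg : ∀ β j γ n, n < 0 → F β j γ n = 0
  master : ∀ (α : G) (i : ℕ) (β : G) (j : ℕ) (γ : G) (n : ℤ),
    2 * ((β : ℂ) - α) * F (α + β) (i + j) γ n +
        2 * ((j : ℂ) - i) * F (α + β) (i + j + 1) γ n =
      (2 * β - γ) * F α i (γ - β) (n - j) + (2 * j + 1 - n) * F α i (γ - β) (n - j - 1) +
        (γ - 2 * α) * F β j (γ - α) (n - i) + (n - 2 * i - 1) * F β j (γ - α) (n - i - 1)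

def levelOneDefect (F : G → ℕ → G → ℤ → ℂ) (β δ : G) (n : ℤ) : ℂ :=
  F β 1 (δ + β) n - F 0 0 δ (n - 1)

namespace IsHalfDerivationCoeff

variable {F : G → ℕ → G → ℤ → ℂ} (hF : IsHalfDerivationCoeff F)
include hF

theorem levelZero_recurrence (α γ : G) (m : ℤ) :
    ((γ : ℂ) - 2 * α) * (F α 0 γ m - F 0 0 (γ - α) m) +
      ((m : ℂ) - 1) * (F α 0 γ (m - 1) - F 0 0 (γ - α) (m - 1)) = 0 := by
  have h := hF.master α 0 0 0 γ m
  simp only [add_zero, zero_add, sub_zero, Nat.cast_zero, ZeroMemClass.coe_zero] at h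
  linear_combination h

theorem levelZero_step {α γ : G} (hne : (γ : ℂ) ≠ 2 * α) {m : ℤ}
    (h : F α 0 γ (m - 1) = F 0 0 (γ - α) (m - 1)) : F α 0 γ m = F 0 0 (γ - α) m := by
  have hrec := hF.levelZero_recurrence α γ m
  rw [h, sub_self, mul_zero, add_zero] at hrec
  exact sub_eq_zero.mp ((mul_eq_zero.mp hrec).resolve_left (sub_ne_zero.mpr hne))

theorem levelZero_of_ne {α γ : G} (hne : (γ : ℂ) ≠ 2 * α) (n : ℤ) :
    F α 0 γ n = F 0 0 (γ - α) n := by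
  rcases lt_or_ge n 0 with hn | hn
  · rw [hF.eq_zero_of_neg _ _ _ _ hn, hF.eq_zero_of_neg _ _ _ _ hn]
  induction n, hn using Int.leInduction with
  | base => exact hF.levelZero_step hne (by simp [hF.eq_zero_of_neg])
  | succ n _ ih => exact hF.levelZero_step hne (by simpa using ih)

theorem levelZero_of_ne_zero (α γ : G) {n : ℤ} (hn : n ≠ 0) :
    F α 0 γ n = F 0 0 (γ - α) n := by
  by_cases hne : (γ : ℂ) = 2 * α
  · have h := hF.levelZero_recurrence α γ (n + 1)
    rw [hne, sub_self, zero_mul, zero_add, add_sub_cancel_right] at h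
    push_cast at h
    simpa [hn, sub_eq_zero] using h
  · exact hF.levelZero_of_ne hne n

variable [Nontrivial G]

theorem levelZero_diag (β : G) : F β 0 (β + β) 0 = F 0 0 β 0 := by
  obtain ⟨α, hα⟩ := exists_coe_notMem (G := G) {0, (β : ℂ), (β : ℂ) / 2}
  simp only [Finset.mem_insert, Finset.mem_singleton, not_or] at hα
  obtain ⟨h0, hβ, h2⟩ := hα
  have h := hF.master α 0 (β - α) 0 (β + β) 0
  have e₁ : F α 0 (β + β - (β - α)) 0 = F 0 0 β 0 := by
    rw [hF.levelZero_of_ne (by push_cast; intro h; apply hβ; linear_combination -h)]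
    congr 1; abel
  have e₂ : F (β - α) 0 (β + β - α) 0 = F 0 0 β 0 := by
    rw [hF.levelZero_of_ne (by push_cast; intro h; apply h0; linear_combination h)]
    congr 1; abel
  simp only [add_sub_cancel, add_zero, Nat.cast_zero, sub_zero, e₁, e₂,
    hF.eq_zero_of_neg _ _ _ (0 - 1) (by norm_num)] at h
  push_cast at h
  have hc : 2 * ((β : ℂ) - 2 * α) ≠ 0 := by
    intro hc; apply h2; linear_combination -hc / 4
  exact mul_left_cancel₀ hc (by linear_combination h)

theorem levelZero (β γ : G) (n : ℤ) : F β 0 γ n = F 0 0 (γ - β) n := by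
  by_cases hc : (γ : ℂ) = 2 * β ∧ n = 0
  · obtain ⟨hγ, rfl⟩ := hc
    obtain rfl : γ = β + β := Subtype.ext (by push_cast; linear_combination hγ)
    rw [hF.levelZero_diag, add_sub_cancel_right]
  · rcases not_and_or.mp hc with h | h
    · exact hF.levelZero_of_ne h n
    · exact hF.levelZero_of_ne_zero β γ h

theorem levelOneDefect_recurrence (β ν δ : G) (n : ℤ) :
    ((δ : ℂ) + β - 3 * ν) * levelOneDefect F (β + ν) δ n +
        ((n : ℂ) - 1) * levelOneDefect F (β + ν) δ (n - 1) =
      ((δ : ℂ) + β - ν) * levelOneDefect F β δ n +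
        ((n : ℂ) - 1) * levelOneDefect F β δ (n - 1) := by
  have h₁ := hF.master ν 0 β 1 (δ + (β + ν)) n
  have h₂ := hF.master 0 0 (β + ν) 1 (δ + (β + ν)) n
  simp only [zero_add, sub_zero, Nat.cast_zero, Nat.cast_one, ZeroMemClass.coe_zero,
    hF.levelZero ν] at h₁ h₂
  rw [add_comm ν β, show δ + (β + ν) - β - ν = δ by abel,
    show δ + (β + ν) - ν = δ + β by abel] at h₁
  rw [add_sub_cancel_right] at h₂
  push_cast at h₁ h₂
  simp only [levelOneDefect]
  linear_combination h₁ - h₂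

theorem levelOneDefect_eq_zero_of_ne_zero {β : G} (hβ : (β : ℂ) ≠ 0)
    (δ : G) (n : ℤ) : levelOneDefect F β δ n = 0 := by
  have hdouble : ∀ m, levelOneDefect F (β + β) δ m = levelOneDefect F β δ m := by
    intro m
    have h₁ := hF.levelOneDefect_recurrence β β δ m
    have h₂ := hF.levelOneDefect_recurrence (β + β) (-β) δ m
    rw [add_neg_cancel_right] at h₂
    push_cast at h₁ h₂
    have hc : 5 * (β : ℂ) ≠ 0 := mul_ne_zero (by norm_num) hβ
    exact mul_left_cancel₀ hc (by linear_combination -h₁ - h₂)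
  have h := hF.levelOneDefect_recurrence β β δ n
  rw [hdouble, hdouble] at h
  have hc : 2 * (β : ℂ) ≠ 0 := mul_ne_zero two_ne_zero hβ
  exact mul_left_cancel₀ hc (by linear_combination -h)

theorem levelOneDefect_eq_zero (β δ : G) (n : ℤ) :
    levelOneDefect F β δ n = 0 := by
  by_cases hβ : (β : ℂ) = 0
  · obtain rfl : β = 0 := Subtype.ext hβ
    have hν : ∀ ν : G, (ν : ℂ) ≠ 0 → ((δ : ℂ) - ν) * levelOneDefect F 0 δ n +
        ((n : ℂ) - 1) * levelOneDefect F 0 δ (n - 1) = 0 := by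
      intro ν hν
      have h := hF.levelOneDefect_recurrence 0 ν δ n
      rw [zero_add, hF.levelOneDefect_eq_zero_of_ne_zero hν,
        hF.levelOneDefect_eq_zero_of_ne_zero hν] at h
      push_cast at h
      linear_combination -h
    obtain ⟨ν₁, hν₁⟩ := exists_coe_notMem (G := G) {0}
    obtain ⟨ν₂, hν₂⟩ := exists_coe_notMem (G := G) {0, (ν₁ : ℂ)}
    simp only [Finset.mem_insert, Finset.mem_singleton, not_or] at hν₁ hν₂
    have hc : (ν₁ : ℂ) - ν₂ ≠ 0 := sub_ne_zero.mpr (Ne.symm hν₂.2)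
    exact mul_left_cancel₀ hc (by linear_combination hν ν₂ hν₂.1 - hν ν₁ hν₁)
  · exact hF.levelOneDefect_eq_zero_of_ne_zero hβ δ n

theorem levelOne (β γ : G) (n : ℤ) : F β 1 γ n = F 0 0 (γ - β) (n - 1) := by
  simpa [levelOneDefect, sub_eq_zero] using hF.levelOneDefect_eq_zero β (γ - β) n

theorem eq_shift (β : G) (j : ℕ) (γ : G) (n : ℤ) :
    F β j γ n = F 0 0 (γ - β) (n - j) := by
  induction j generalizing n with
  | zero => simpa using hF.levelZero β γ n
  | succ j ih =>
    rcases Nat.eq_zero_or_pos j with rfl | hj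
    · simpa using hF.levelOne β γ n
    have h := hF.master 0 0 β j γ n
    simp only [zero_add, sub_zero, Nat.cast_zero, ZeroMemClass.coe_zero, ih] at h
    rw [sub_right_comm n 1] at h
    have hc : 2 * (j : ℂ) ≠ 0 := mul_ne_zero two_ne_zero (by exact_mod_cast hj.ne')
    refine mul_left_cancel₀ hc ?_
    push_cast [← sub_sub]
    linear_combination h

end IsHalfDerivationCoeff

variable (bas) in
noncomputable def coeffL (φ : Lg →ₗ[ℂ] Lg) (β : G) (j : ℕ) (γ : G) (n : ℤ) : ℂ :=
  coordL bas γ n (φ (bas (.L β j)))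

section HalfDerivation

variable (hbas : IsWhatBasis bas) {φ : Lg →ₗ[ℂ] Lg} (hφ : IsHalfDerivation ℂ φ)
  (hφC : φ (bas .C) = 0)
include hbas hφ hφC

theorem two_smul_map_lie_basis (α β : G) (i j : ℕ) :
    (2 : ℂ) • (((β : ℂ) - α) • φ (bas (.L (α + β) (i + j))) +
        ((j : ℂ) - i) • φ (bas (.L (α + β) (i + j + 1)))) =
      ⁅φ (bas (.L α i)), bas (.L β j)⁆ - ⁅φ (bas (.L β j)), bas (.L α i)⁆ := by
  have h := hφ (bas (.L α i)) (bas (.L β j))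
  rw [hbas.lie_L, map_add, map_add, map_smul, map_smul, map_smul, hφC, smul_zero, add_zero,
    ← lie_skew (bas (.L α i))] at h
  rw [h, sub_eq_add_neg]

theorem isHalfDerivationCoeff_coeffL : IsHalfDerivationCoeff (coeffL bas φ) where
  eq_zero_of_neg β j γ n hn := by simp [coeffL, coordL_of_neg bas γ hn]
  master α i β j γ n := by
    have h := congrArg (coordL bas γ n) (two_smul_map_lie_basis hbas hφ hφC α β i j)
    simp only [map_smul, map_add, map_sub, coordL_lie_basis hbas, smul_eq_mul] at h
    simp only [coeffL]
    linear_combination h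

theorem coord_C_master (α β : G) (i j : ℕ) :
    2 * ((β : ℂ) - α) * bas.coord .C (φ (bas (.L (α + β) (i + j)))) +
        2 * ((j : ℂ) - i) * bas.coord .C (φ (bas (.L (α + β) (i + j + 1)))) =
      (if j = 0 then ((β : ℂ) - β ^ 3) / 12 else 0) * coeffL bas φ α i (-β) 0 -
        (if i = 0 then ((α : ℂ) - α ^ 3) / 12 else 0) * coeffL bas φ β j (-α) 0 := by
  have h := congrArg (bas.coord .C) (two_smul_map_lie_basis hbas hφ hφC α β i j)
  simp only [map_smul, map_add, map_sub, coord_C_lie_basis hbas, smul_eq_mul] at h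
  simp only [coeffL]
  linear_combination h

variable [Nontrivial G]

theorem coeffL_zero_zero_of_nonpos (δ : G) {m : ℤ} (hm : m ≤ 0) :
    coeffL bas φ 0 0 δ m = 0 := by
  have hF := isHalfDerivationCoeff_coeffL hbas hφ hφC
  rcases hm.lt_or_eq with hm | rfl
  · exact hF.eq_zero_of_neg _ _ _ _ hm
  have h : ∀ a : G, 2 * (-(δ : ℂ) - 2 * a) * bas.coord .C (φ (bas (.L (-δ) 0))) =
      (((-δ : ℂ) - a) - (-δ - a) ^ 3 - (a - a ^ 3)) / 12 * coeffL bas φ 0 0 δ 0 := by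
    intro a
    have h := coord_C_master hbas hφ hφC a (-δ - a) 0 0
    simp only [add_sub_cancel, if_true, hF.eq_shift a 0, hF.eq_shift (-δ - a) 0] at h
    rw [show -(-δ - a) - a = δ by abel, show -a - (-δ - a) = δ by abel] at h
    push_cast at h
    linear_combination h
  obtain ⟨t, ht⟩ := exists_coe_notMem (G := G) {0}
  replace ht : (t : ℂ) ≠ 0 := by simpa using ht
  -- The third difference in `a` kills the left side, which is linear in `a`.
  have h₃ : (t : ℂ) ^ 3 * coeffL bas φ 0 0 δ 0 = 0 := by
    have e₀ := h 0
    have e₁ := h t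
    have e₂ := h (t + t)
    have e₃ := h (t + t + t)
    push_cast at e₀ e₁ e₂ e₃
    linear_combination e₀ - 3 * e₁ + 3 * e₂ - e₃
  exact (mul_eq_zero.mp h₃).resolve_left (pow_ne_zero 3 ht)

theorem coord_C_map_basis_L (σ : G) (j : ℕ) : bas.coord .C (φ (bas (.L σ j))) = 0 := by
  have hF := isHalfDerivationCoeff_coeffL hbas hφ hφC
  have h : ∀ a : G, 2 * ((σ : ℂ) - 2 * a) * bas.coord .C (φ (bas (.L σ j))) +
      2 * j * bas.coord .C (φ (bas (.L σ (j + 1)))) = 0 := by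
    intro a
    have h := coord_C_master hbas hφ hφC a (σ - a) 0 j
    rw [hF.eq_shift a 0, hF.eq_shift (σ - a) j,
      coeffL_zero_zero_of_nonpos hbas hφ hφC _ (by simp),
      coeffL_zero_zero_of_nonpos hbas hφ hφC _ (by simp), add_sub_cancel, zero_add] at h
    push_cast at h
    linear_combination h
  obtain ⟨t, ht⟩ := exists_coe_notMem (G := G) {0}
  replace ht : 4 * (t : ℂ) ≠ 0 := mul_ne_zero (by norm_num) (by simpa using ht)
  have h₀ := h 0
  have h₁ := h t
  push_cast at h₀
  exact mul_left_cancel₀ ht (by linear_combination h₀ - h₁)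

theorem map_basis_L_eq_shift (β : G) (j : ℕ) :
    φ (bas (.L β j)) = shift bas β j (φ (bas (.L 0 0))) := by
  refine bas.ext_elem fun idx => ?_
  simp only [← Module.Basis.coord_apply]
  cases idx with
  | C => rw [coord_C_map_basis_L hbas hφ hφC, coord_C_shift]
  | L γ m =>
    rw [← coordL_natCast, coordL_shift]
    exact (isHalfDerivationCoeff_coeffL hbas hφ hφC).eq_shift β j γ m

theorem exists_map_basis_zero_zero_eq_sum :
    ∃ a : G × ℕ →₀ ℂ,
      φ (bas (.L 0 0)) = a.sum fun p c => c • bas (.L p.1 (p.2 + 1)) :=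
  exists_eq_sum_basis_L_succ bas (coord_C_map_basis_L hbas hφ hφC 0 0) fun δ => by
    have h := coeffL_zero_zero_of_nonpos hbas hφ hφC δ (le_refl ((0 : ℕ) : ℤ))
    rwa [coeffL, coordL_natCast] at h

end HalfDerivation

end HeisenbergVirasoro

open HeisenbergVirasoro in
theorem transposedPoisson_What_structure_general
    (G : AddSubgroup ℂ) [Nontrivial G]
    (Lg : Type*) [LieRing Lg] [LieAlgebra ℂ Lg]
    (bas : Module.Basis (WhatIdx G) ℂ Lg)
    (hLL : ∀ (α β : G) (i j : ℕ),
      ⁅bas (WhatIdx.L α i), bas (WhatIdx.L β j)⁆ =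
        ((β : ℂ) - (α : ℂ)) • bas (WhatIdx.L (α + β) (i + j)) +
        ((j : ℂ) - (i : ℂ)) • bas (WhatIdx.L (α + β) (i + j + 1)) +
        (if α + β = 0 ∧ i = 0 ∧ j = 0 then ((α : ℂ) ^ 3 - (α : ℂ)) / 12
          else 0) • bas WhatIdx.C)
    (hC : ∀ x : Lg, ⁅bas WhatIdx.C, x⁆ = 0)
    (mul : Lg →ₗ[ℂ] Lg →ₗ[ℂ] Lg)
    (hcomm : ∀ x y : Lg, mul x y = mul y x)
    (hcompat : ∀ x y z : Lg,
      (2 : ℂ) • mul z ⁅x, y⁆ = ⁅mul z x, y⁆ + ⁅x, mul z y⁆) :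
    (∀ x : Lg, mul (bas WhatIdx.C) x = 0) ∧
    ∃ a : G × ℕ →₀ ℂ, ∀ (α β : G) (i j : ℕ),
      mul (bas (WhatIdx.L α i)) (bas (WhatIdx.L β j)) =
        a.sum (fun p c => c • bas (WhatIdx.L (p.1 + α + β) (p.2 + i + j + 1))) := by
  have hbas : IsWhatBasis bas := ⟨hLL, hC⟩
  have hmul : ∀ z, IsHalfDerivation ℂ (mul z) := fun z x y => hcompat x y z
  have hCx := mul_basis_C_eq_zero hbas hcomm hmul
  have hxC : ∀ z, mul z (bas .C) = 0 := fun z => by rw [hcomm, hCx, LinearMap.zero_apply]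
  have hshift : ∀ z β j, mul z (bas (.L β j)) = shift bas β j (mul z (bas (.L 0 0))) :=
    fun z => map_basis_L_eq_shift hbas (hmul z) (hxC z)
  obtain ⟨a, ha⟩ := exists_map_basis_zero_zero_eq_sum hbas (hmul (bas (.L 0 0))) (hxC _)
  refine ⟨fun x => by rw [hCx, LinearMap.zero_apply], a, fun α β i j => ?_⟩
  rw [hshift, hcomm, hshift, shift_shift, ha, map_finsuppSum]
  simp only [map_smul, shift_basis_L, add_assoc, add_comm 1]

/-- every transposed Poisson structure on `Ŵ(G)` satisfies
`C · x = 0` and `L_{α,i} · L_{β,j} = Σ_{d,k} a^{d,k} L_{d+α+β, k+i+j+1}` for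
some finitely supported family `(a^{d,k})`, `d ∈ G`, `k ∈ ℤ_{≥0}`. -/
theorem transposedPoisson_What_structure
    (G : AddSubgroup ℂ) [Nontrivial G]
    (Lg : Type*) [LieRing Lg] [LieAlgebra ℂ Lg]
    (bas : Module.Basis (WhatIdx G) ℂ Lg)
    (hLL : ∀ (α β : G) (i j : ℕ),
      ⁅bas (WhatIdx.L α i), bas (WhatIdx.L β j)⁆ =
        ((β : ℂ) - (α : ℂ)) • bas (WhatIdx.L (α + β) (i + j)) +
        ((j : ℂ) - (i : ℂ)) • bas (WhatIdx.L (α + β) (i + j + 1)) +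
        (if α + β = 0 ∧ i = 0 ∧ j = 0 then ((α : ℂ) ^ 3 - (α : ℂ)) / 12
          else 0) • bas WhatIdx.C)
    (hC : ∀ x : Lg, ⁅bas WhatIdx.C, x⁆ = 0)
    (mul : Lg →ₗ[ℂ] Lg →ₗ[ℂ] Lg)
    (hcomm : ∀ x y : Lg, mul x y = mul y x)
    (hassoc : ∀ x y z : Lg, mul (mul x y) z = mul x (mul y z))
    (hcompat : ∀ x y z : Lg,
      (2 : ℂ) • mul z ⁅x, y⁆ = ⁅mul z x, y⁆ + ⁅x, mul z y⁆) :
    (∀ x : Lg, mul (bas WhatIdx.C) x = 0) ∧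
    ∃ a : G × ℕ →₀ ℂ, ∀ (α β : G) (i j : ℕ),
      mul (bas (WhatIdx.L α i)) (bas (WhatIdx.L β j)) =
        a.sum (fun p c => c • bas (WhatIdx.L (p.1 + α + β) (p.2 + i + j + 1))) :=
  transposedPoisson_What_structure_general G Lg bas hLL hC mul hcomm hcompat
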